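/- arXiv:1108.4662 — 3 statements merged into one kernel-verified Lean document; each statement's English description precedes it below -/
import Mathlib

section
/- Let Q = {q_k}_{k=0}^∞ be any simple set of real polynomials (i.e., deg q_k = k for all k ≥ 0). If a sequence (γ_k)_{k=0}^∞ of real numbers is a Q-multiplier sequence, then it is also a classical multiplier sequence (a multiplier sequence for the standard basis {x^k}). -/
/-!
Let `T` be the diagonal operator `x^k ↦ γ_k x^k`. If `p = ∑ b_k x^k` has simple real roots, put
`F_r = ∑ b_k r^k / lc(q_k) · q_k`. Since `r^k q_k(x / r) → lc(q_k) x^k` as `r → 0`, the rescaled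
polynomials `F_r(x / r)` tend to `p` coefficientwise; simple real roots survive small perturbations
(intermediate value theorem), so `F_r` is hyperbolic for small `r`. The `Q`-multiplier keeps it
hyperbolic, and rescaling its image back gives polynomials tending to `T p`.

Hyperbolicity is closed under coefficientwise limits of bounded degree: for hyperbolic `f` and
`z = a + ib`, the `d`-th coefficient `c_d` of `f(x + a)` satisfies
`c_d² b^{2d} ≤ 2^{deg f} |f(z)|²`; at a nonreal root `z` of the limit, with `d` its degree, the
left side stays away from `0` while the right side tends to `0`. Hence `T p` is hyperbolic; a
general hyperbolic `p` is the limit of the polynomials obtained by moving its `i`-th smallest root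
by `i ε`, which have simple roots.
-/

open Polynomial

/-- A real polynomial is *hyperbolic* if all of its complex roots are real
(the zero polynomial and nonzero constants are vacuously hyperbolic). -/
def Hyperbolic (p : Polynomial ℝ) : Prop :=
  ∀ z ∈ (p.map (algebraMap ℝ ℂ)).roots, z.im = 0

/-- `γ` is a multiplier sequence for the simple set `q`: the linear operator
sending `q k` to `γ k • q k` maps hyperbolic polynomials to hyperbolic
polynomials.  (Since `q` is a simple set, every real polynomial has a unique
expansion `∑ a k • q k`, so this quantification over coefficient families
expresses exactly that property.) -/
def IsMultiplierSeqFor (q : ℕ → Polynomial ℝ) (γ : ℕ → ℝ) : Prop :=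
  ∀ (n : ℕ) (a : ℕ → ℝ),
    Hyperbolic (∑ k ∈ Finset.range n, C (a k) * q k) →
    Hyperbolic (∑ k ∈ Finset.range n, C (γ k * a k) * q k)

open Filter Topology

theorem hyperbolic_iff_splits {p : ℝ[X]} : Hyperbolic p ↔ p.Splits := by
  refine ⟨fun hp => ?_, fun hp z hz => ?_⟩
  · refine (IsAlgClosed.splits _).of_splits_map (algebraMap ℝ ℂ) fun z hz => ⟨z.re, ?_⟩
    exact Complex.ext (by simp) (by simp [hp z hz])
  · rw [hp.roots_map] at hz
    obtain ⟨x, -, rfl⟩ := Multiset.mem_map.mp hz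
    simp

theorem hyperbolic_comp_C_mul_X_iff {p : ℝ[X]} {r : ℝ} (hr : r ≠ 0) :
    Hyperbolic (p.comp (C r * X)) ↔ Hyperbolic p := by
  have hlin (s : ℝ) (hs : s ≠ 0) (f : ℝ[X]) (hf : f.Splits) : (f.comp (C s * X)).Splits :=
    hf.comp_of_natDegree_le_one_of_invertible (natDegree_C_mul_X s hs).le
      (invertibleOfNonzero (by simpa [leadingCoeff_C_mul_X] using hs))
  simp only [hyperbolic_iff_splits]
  refine ⟨fun h => ?_, hlin r hr p⟩
  have := hlin r⁻¹ (inv_ne_zero hr) _ h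
  rwa [comp_assoc, mul_comp, C_comp, X_comp, ← mul_assoc, ← C_mul, mul_inv_cancel₀ hr, C_1,
    one_mul, comp_X] at this

theorem hyperbolic_of_injective_roots {ι : Type*} [Fintype ι] {g : ℝ[X]} {t : ι → ℝ}
    (ht : Function.Injective t) (hroot : ∀ i, g.eval (t i) = 0)
    (hdeg : g.natDegree ≤ Fintype.card ι) : Hyperbolic g := by
  rcases eq_or_ne g 0 with rfl | hg
  · simp [Hyperbolic]
  rw [hyperbolic_iff_splits, splits_iff_card_roots]
  refine le_antisymm (card_roots' g) (hdeg.trans ?_)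
  have hsub : Finset.univ.val.map t ≤ g.roots :=
    (Multiset.le_iff_subset (Finset.univ.nodup.map ht)).mpr fun x hx => by
      obtain ⟨i, -, rfl⟩ := Multiset.mem_map.mp hx
      exact (mem_roots hg).mpr (hroot i)
  simpa using Multiset.card_le_card hsub

section CoefficientwiseConvergence

variable {α : Type*} {l : Filter α} {G : α → ℝ[X]} {p : ℝ[X]} {N : ℕ}

theorem natDegree_le_of_tendsto_coeff [l.NeBot] (hdeg : ∀ᶠ r in l, (G r).natDegree ≤ N)
    (hcoeff : ∀ k, Tendsto (fun r => (G r).coeff k) l (𝓝 (p.coeff k))) : p.natDegree ≤ N :=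
  natDegree_le_iff_coeff_eq_zero.mpr fun k hk =>
    tendsto_nhds_unique (hcoeff k) <| tendsto_const_nhds.congr' <| hdeg.mono fun r hr =>
      (coeff_eq_zero_of_natDegree_lt (hr.trans_lt (by exact_mod_cast hk))).symm

theorem tendsto_linearMap_of_tendsto_coeff [l.NeBot] {M : Type*} [AddCommMonoid M] [Module ℝ M]
    [TopologicalSpace M] [ContinuousAdd M] [ContinuousSMul ℝ M] (L : ℝ[X] →ₗ[ℝ] M)
    (hdeg : ∀ᶠ r in l, (G r).natDegree ≤ N)
    (hcoeff : ∀ k, Tendsto (fun r => (G r).coeff k) l (𝓝 (p.coeff k))) :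
    Tendsto (fun r => L (G r)) l (𝓝 (L p)) := by
  have hsum : ∀ g : ℝ[X], g.natDegree ≤ N →
      L g = ∑ k ∈ Finset.range (N + 1), g.coeff k • L (X ^ k) := fun g hg => by
    conv_lhs => rw [g.as_sum_range' (N + 1) (Nat.lt_succ_of_le hg)]
    simp only [← smul_X_eq_monomial, map_sum, map_smul]
  rw [hsum p (natDegree_le_of_tendsto_coeff hdeg hcoeff)]
  refine (tendsto_finsetSum _ fun k _ => (hcoeff k).smul_const _).congr' ?_
  filter_upwards [hdeg] with r hr using (hsum _ hr).symm

end CoefficientwiseConvergence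

theorem sq_coeff_prod_mul_pow_le (S : Multiset ℝ) (b : ℝ) (d : ℕ) :
    ((S.map (X - C ·)).prod.coeff d) ^ 2 * (b ^ 2) ^ d ≤
      2 ^ Multiset.card S * Complex.normSq (aeval (b * Complex.I) (S.map (X - C ·)).prod) := by
  induction S using Multiset.induction_on generalizing d with
  | empty => rcases d with _ | d <;> simp [coeff_one]
  | cons s S ih =>
    set P := (S.map (X - C ·)).prod
    set K : ℝ := 2 ^ Multiset.card S
    set E := Complex.normSq (aeval (b * Complex.I) P)
    have hKE : 0 ≤ K * E := mul_nonneg (by positivity) (Complex.normSq_nonneg _)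
    have hnorm : Complex.normSq (b * Complex.I - s) = s ^ 2 + b ^ 2 := by
      simp [Complex.normSq_apply]; ring
    have hrhs : 2 ^ Multiset.card (s ::ₘ S) *
        Complex.normSq (aeval (b * Complex.I) ((s ::ₘ S).map (X - C ·)).prod) =
          2 * (s ^ 2 + b ^ 2) * (K * E) := by
      simp only [Multiset.map_cons, Multiset.prod_cons, Multiset.card_cons, map_mul, map_sub,
        aeval_X, aeval_C, Complex.coe_algebraMap, hnorm, K, E, P]
      ring
    rw [hrhs, Multiset.map_cons, Multiset.prod_cons, mul_comm (X - C s)]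
    rcases d with _ | d
    · have := ih 0
      simp only [mul_coeff_zero, coeff_sub, coeff_X_zero, coeff_C_zero, pow_zero, mul_one] at this ⊢
      nlinarith [mul_le_mul_of_nonneg_left this (sq_nonneg s), sq_nonneg b]
    · have h₀ := ih d
      have h₁ := ih (d + 1)
      rw [coeff_mul_X_sub_C, pow_succ (b ^ 2) d]
      rw [pow_succ (b ^ 2) d] at h₁
      have hsq : (P.coeff d - P.coeff (d + 1) * s) ^ 2 ≤
          2 * P.coeff d ^ 2 + 2 * s ^ 2 * P.coeff (d + 1) ^ 2 := by
        nlinarith [sq_nonneg (P.coeff d + s * P.coeff (d + 1))]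
      calc (P.coeff d - P.coeff (d + 1) * s) ^ 2 * ((b ^ 2) ^ d * b ^ 2)
          ≤ (2 * P.coeff d ^ 2 + 2 * s ^ 2 * P.coeff (d + 1) ^ 2) * ((b ^ 2) ^ d * b ^ 2) := by
            gcongr
        _ = 2 * b ^ 2 * (P.coeff d ^ 2 * (b ^ 2) ^ d)
            + 2 * s ^ 2 * (P.coeff (d + 1) ^ 2 * ((b ^ 2) ^ d * b ^ 2)) := by ring
        _ ≤ 2 * b ^ 2 * (K * E) + 2 * s ^ 2 * (K * E) := by gcongr
        _ = 2 * (s ^ 2 + b ^ 2) * (K * E) := by ring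

theorem Hyperbolic.sq_coeff_taylor_mul_pow_le {g : ℝ[X]} (hg : Hyperbolic g) (z : ℂ)
    (d : ℕ) : ((taylor z.re g).coeff d) ^ 2 * (z.im ^ 2) ^ d ≤
      2 ^ g.natDegree * Complex.normSq (aeval z g) := by
  have hz : aeval z g = aeval (z.im * Complex.I) (taylor z.re g) := by
    simp [taylor_apply, aeval_comp, add_comm, Complex.re_add_im]
  have hg' := (hyperbolic_iff_splits.mp hg).taylor z.re
  rw [hz, ← natDegree_taylor g z.re, hg'.natDegree_eq_card_roots]
  generalize hS : (taylor z.re g).roots = S at hg'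
  generalize hc : (taylor z.re g).leadingCoeff = c at hg'
  rw [hg'.eq_prod_roots, hS, hc, coeff_C_mul, map_mul, aeval_C, map_mul, Complex.coe_algebraMap,
    Complex.normSq_ofReal]
  set Q := (S.map (X - C ·)).prod
  calc (c * Q.coeff d) ^ 2 * (z.im ^ 2) ^ d = c * c * (Q.coeff d ^ 2 * (z.im ^ 2) ^ d) := by ring
    _ ≤ c * c * (2 ^ Multiset.card S * Complex.normSq (aeval (z.im * Complex.I) Q)) :=
      mul_le_mul_of_nonneg_left (sq_coeff_prod_mul_pow_le S z.im d) (mul_self_nonneg c)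
    _ = _ := by ring

theorem Hyperbolic.of_tendsto_coeff {α : Type*} {l : Filter α} [l.NeBot] {G : α → ℝ[X]}
    {p : ℝ[X]} {N : ℕ} (hdeg : ∀ᶠ r in l, (G r).natDegree ≤ N)
    (hG : ∀ᶠ r in l, Hyperbolic (G r))
    (hcoeff : ∀ k, Tendsto (fun r => (G r).coeff k) l (𝓝 (p.coeff k))) : Hyperbolic p := by
  intro z hz
  by_contra hb
  have hp : p ≠ 0 := by rintro rfl; simp at hz
  rw [mem_roots', IsRoot.def, eval_map_algebraMap] at hz
  have hlead : Tendsto (fun r => (taylor z.re (G r)).coeff p.natDegree) l (𝓝 p.leadingCoeff) := by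
    simpa [coeff_taylor_natDegree] using
      tendsto_linearMap_of_tendsto_coeff ((lcoeff ℝ p.natDegree).comp (taylor z.re)) hdeg hcoeff
  have heval : Tendsto (fun r => Complex.normSq (aeval z (G r))) l (𝓝 0) := by
    simpa [hz.2, Function.comp_def] using (Complex.continuous_normSq.tendsto _).comp
      (tendsto_linearMap_of_tendsto_coeff (aeval z).toLinearMap hdeg hcoeff)
  have hle : p.leadingCoeff ^ 2 * (z.im ^ 2) ^ p.natDegree ≤ 2 ^ N * 0 := by
    refine le_of_tendsto_of_tendsto ((hlead.pow 2).mul_const _) (heval.const_mul _) ?_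
    filter_upwards [hdeg, hG] with r hr hGr
    exact (hGr.sq_coeff_taylor_mul_pow_le z _).trans
      (mul_le_mul_of_nonneg_right (pow_le_pow_right₀ one_le_two hr) (Complex.normSq_nonneg _))
  have : 0 < p.leadingCoeff ^ 2 * (z.im ^ 2) ^ p.natDegree := by
    have := leadingCoeff_ne_zero.mpr hp
    positivity
  linarith

section SimpleRoots

variable {ι : Type*} [Fintype ι] {ρ : ι → ℝ}

theorem exists_pos_forall_two_mul_lt_abs_sub (hρ : Function.Injective ρ) :
    ∃ δ > 0, ∀ i j, i ≠ j → 2 * δ < |ρ i - ρ j| := by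
  have hsmall : ∀ᶠ δ in 𝓝 (0 : ℝ), ∀ i j, i ≠ j → 2 * δ < |ρ i - ρ j| := by
    refine eventually_all.2 fun i => eventually_all.2 fun j => ?_
    by_cases hij : i = j
    · exact Eventually.of_forall fun _ h => absurd hij h
    have hpos : 0 < |ρ i - ρ j| := abs_pos.mpr (sub_ne_zero.mpr (hρ.ne hij))
    have hlim : Tendsto (fun δ : ℝ => 2 * δ) (𝓝 0) (𝓝 0) :=
      (continuous_const_mul 2).tendsto' 0 0 (mul_zero 2)
    exact (hlim.eventually (gt_mem_nhds hpos)).mono fun _ h _ => h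
  have hpos : ∀ᶠ δ in 𝓝[>] (0 : ℝ), 0 < δ := self_mem_nhdsWithin
  exact (hpos.and (hsmall.filter_mono nhdsWithin_le_nhds)).exists

theorem eval_sub_mul_eval_add_neg (c : ℝ) (hc : c ≠ 0) {δ : ℝ} (hδ : 0 < δ)
    (hsep : ∀ i j, i ≠ j → δ < |ρ i - ρ j|) (i : ι) :
    (C c * ∏ j, (X - C (ρ j))).eval (ρ i - δ) * (C c * ∏ j, (X - C (ρ j))).eval (ρ i + δ) < 0 := by
  classical
  simp only [eval_mul, eval_C, eval_prod, eval_sub, eval_X]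
  rw [mul_mul_mul_comm, ← Finset.prod_mul_distrib,
    ← Finset.mul_prod_erase _ _ (Finset.mem_univ i)]
  refine mul_neg_of_pos_of_neg (mul_self_pos.mpr hc) (mul_neg_of_neg_of_pos (by nlinarith) ?_)
  refine Finset.prod_pos fun j hj => ?_
  have hlt := hsep i j (Finset.ne_of_mem_erase hj).symm
  have : δ ^ 2 < (ρ i - ρ j) ^ 2 := by
    rw [← sq_abs (ρ i - ρ j)]; exact pow_lt_pow_left₀ hlt hδ.le two_ne_zero
  nlinarith

theorem eventually_hyperbolic_of_tendsto_coeff {α : Type*} {l : Filter α} [l.NeBot]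
    (hρ : Function.Injective ρ) {c : ℝ} (hc : c ≠ 0) {G : α → ℝ[X]}
    (hdeg : ∀ᶠ r in l, (G r).natDegree ≤ Fintype.card ι)
    (hcoeff : ∀ k, Tendsto (fun r => (G r).coeff k) l
      (𝓝 ((C c * ∏ i, (X - C (ρ i))).coeff k))) :
    ∀ᶠ r in l, Hyperbolic (G r) := by
  obtain ⟨δ, hδ, hsep⟩ := exists_pos_forall_two_mul_lt_abs_sub hρ
  have heval (x : ℝ) : Tendsto (fun r => (G r).eval x) l
      (𝓝 ((C c * ∏ i, (X - C (ρ i))).eval x)) := by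
    simpa using tendsto_linearMap_of_tendsto_coeff (aeval x).toLinearMap hdeg hcoeff
  have hsign : ∀ᶠ r in l, ∀ i, (G r).eval (ρ i - δ) * (G r).eval (ρ i + δ) < 0 :=
    eventually_all.2 fun i => ((heval _).mul (heval _)).eventually (gt_mem_nhds
      (eval_sub_mul_eval_add_neg c hc hδ (fun i j hij => by linarith [hsep i j hij]) i))
  filter_upwards [hdeg, hsign] with r hr hsign
  have hroot (i : ι) : ∃ t ∈ Set.Icc (ρ i - δ) (ρ i + δ), (G r).eval t = 0 := by
    rw [← Set.uIcc_of_le (by linarith : ρ i - δ ≤ ρ i + δ)]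
    refine intermediate_value_uIcc (G r).continuous.continuousOn (Set.mem_uIcc.mpr ?_)
    rcases mul_neg_iff.mp (hsign i) with h | h
    exacts [Or.inr ⟨h.2.le, h.1.le⟩, Or.inl ⟨h.1.le, h.2.le⟩]
  choose t ht hteval using hroot
  refine hyperbolic_of_injective_roots (fun i j hij => ?_) hteval hr
  by_contra hne
  obtain ⟨hi₁, hi₂⟩ := ht i
  obtain ⟨hj₁, hj₂⟩ := ht j
  rw [hij] at hi₁ hi₂
  exact (hsep i j hne).not_ge (abs_le.mpr ⟨by linarith, by linarith⟩)

end SimpleRoots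

theorem continuous_coeff_prod_X_sub_C {ι : Type*} (s : Finset ι) {f : ι → ℝ → ℝ}
    (hf : ∀ i, Continuous (f i)) (j : ℕ) :
    Continuous fun ε => (∏ i ∈ s, (X - C (f i ε))).coeff j := by
  have key := Finset.prod_induction (s := s) (fun i ε => X - C (f i ε))
    (fun F : ℝ → ℝ[X] => ∀ j, Continuous fun ε => (F ε).coeff j)
    (fun F G hF hG j => by
      simp only [Pi.mul_apply, coeff_mul]
      exact continuous_finsetSum _ fun x _ => (hF _).mul (hG _))
    (fun j => continuous_const)
    (fun i _ j => by
      simp only [coeff_sub, coeff_X, coeff_C]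
      split_ifs <;> fun_prop)
  simpa [Finset.prod_apply] using key j

theorem Hyperbolic.exists_tendsto_injective_roots {P : ℝ[X]} (hP : Hyperbolic P) :
    ∃ (m : ℕ) (ρ : ℝ → Fin m → ℝ), m = P.natDegree ∧ (∀ ε > 0, Function.Injective (ρ ε)) ∧
      ∀ j, Tendsto (fun ε => (C P.leadingCoeff * ∏ i, (X - C (ρ ε i))).coeff j) (𝓝[>] 0)
        (𝓝 (P.coeff j)) := by
  have hs := hyperbolic_iff_splits.mp hP
  set L := P.roots.sort (· ≤ ·)
  have hmono : Monotone L.get := fun _ _ h => (Multiset.pairwise_sort _ _).rel_get_of_le h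
  refine ⟨L.length, fun ε i => L.get i + i * ε, ?_, fun ε hε => ?_, fun j => ?_⟩
  · rw [Multiset.length_sort, hs.natDegree_eq_card_roots]
  · refine (hmono.add_strictMono fun i i' h => ?_).injective
    exact mul_lt_mul_of_pos_right (by exact_mod_cast h) hε
  · have hcont : Continuous fun ε : ℝ =>
        (C P.leadingCoeff * ∏ i, (X - C (L.get i + i * ε))).coeff j := by
      simp only [coeff_C_mul]
      exact continuous_const.mul (continuous_coeff_prod_X_sub_C _ (fun i => by fun_prop) j)
    have hprod : ∏ i : Fin L.length, (X - C (L.get i)) = (P.roots.map (X - C ·)).prod := by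
      rw [← Multiset.sort_eq P.roots (· ≤ ·), Multiset.map_coe, Multiset.prod_coe]
      exact Fin.prod_univ_fun_getElem L (X - C ·)
    convert (hcont.tendsto 0).mono_left nhdsWithin_le_nhds using 2
    simp only [mul_zero, add_zero, hprod, ← hs.eq_prod_roots]

theorem scaleRoots_comp_C_mul_X (p : ℝ[X]) (r : ℝ) :
    (p.scaleRoots r).comp (C r * X) = C (r ^ p.natDegree) * p := by
  ext j
  rw [comp_C_mul_X_coeff, coeff_scaleRoots, coeff_C_mul]
  rcases le_or_gt j p.natDegree with hj | hj
  · rw [mul_assoc, ← pow_add, Nat.sub_add_cancel hj, mul_comm]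
  · simp [coeff_eq_zero_of_natDegree_lt hj]

/-- With `deg q_k = k`, `(q k).scaleRoots r` is `r^k q_k(x / r)`. -/
noncomputable def rescaledExpansion (q : ℕ → ℝ[X]) (n : ℕ) (b : ℕ → ℝ) (r : ℝ) : ℝ[X] :=
  ∑ k ∈ Finset.range n, C (b k / (q k).leadingCoeff) * (q k).scaleRoots r

section RescaledExpansion

variable {q : ℕ → ℝ[X]} {n : ℕ} {b : ℕ → ℝ}

theorem continuous_coeff_rescaledExpansion (j : ℕ) :
    Continuous fun r => (rescaledExpansion q n b r).coeff j := by
  simp only [rescaledExpansion, finsetSum_coeff, coeff_C_mul, coeff_scaleRoots]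
  fun_prop

theorem rescaledExpansion_zero (hq : ∀ k, (q k).degree = k) :
    rescaledExpansion q n b 0 = ∑ k ∈ Finset.range n, C (b k) * X ^ k := by
  refine Finset.sum_congr rfl fun k _ => ?_
  have hlc : (q k).leadingCoeff ≠ 0 := leadingCoeff_ne_zero.mpr fun h => by simpa [h] using hq k
  rw [scaleRoots_zero, natDegree_eq_of_degree_eq_some (hq k), smul_eq_C_mul, ← mul_assoc, ← C_mul,
    div_mul_cancel₀ _ hlc]

theorem rescaledExpansion_comp_C_mul_X (hq : ∀ k, (q k).natDegree = k) (r : ℝ) :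
    (rescaledExpansion q n b r).comp (C r * X) =
      ∑ k ∈ Finset.range n, C (b k * (r ^ k / (q k).leadingCoeff)) * q k := by
  simp only [rescaledExpansion, sum_comp, mul_comp, C_comp, scaleRoots_comp_C_mul_X, hq]
  refine Finset.sum_congr rfl fun k _ => ?_
  rw [← mul_assoc, ← C_mul]
  ring_nf

theorem natDegree_rescaledExpansion_le (hq : ∀ k, (q k).natDegree = k) {m : ℕ}
    (hb : ∀ k, m < k → b k = 0) (r : ℝ) : (rescaledExpansion q n b r).natDegree ≤ m := by
  refine natDegree_sum_le_of_forall_le _ _ fun k _ => ?_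
  rcases le_or_gt k m with hk | hk
  · exact (natDegree_C_mul_le _ _).trans (by rw [natDegree_scaleRoots, hq]; exact hk)
  · simp [hb k hk]

end RescaledExpansion

theorem IsMultiplierSeqFor.hyperbolic_of_injective_roots {q : ℕ → ℝ[X]} {γ : ℕ → ℝ}
    (h : IsMultiplierSeqFor q γ) (hq : ∀ k, (q k).degree = k) {ι : Type*} [Fintype ι]
    {ρ : ι → ℝ} (hρ : Function.Injective ρ) {c : ℝ} (hc : c ≠ 0) {n : ℕ}
    (hn : Fintype.card ι < n) :
    Hyperbolic (∑ k ∈ Finset.range n,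
      C (γ k * (C c * ∏ i, (X - C (ρ i))).coeff k) * X ^ k) := by
  set P := C c * ∏ i, (X - C (ρ i))
  have hq' (k : ℕ) : (q k).natDegree = k := natDegree_eq_of_degree_eq_some (hq k)
  have hPdeg : P.natDegree = Fintype.card ι := by
    rw [natDegree_C_mul hc, natDegree_finsetProd_X_sub_C_eq_card, Finset.card_univ]
  have hPcoeff (k : ℕ) (hk : Fintype.card ι < k) : P.coeff k = 0 :=
    coeff_eq_zero_of_natDegree_lt (hPdeg ▸ hk)
  have htendsto (b : ℕ → ℝ) (j : ℕ) : Tendsto (fun r => (rescaledExpansion q n b r).coeff j)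
      (𝓝[≠] 0) (𝓝 ((∑ k ∈ Finset.range n, C (b k) * X ^ k).coeff j)) := by
    rw [← rescaledExpansion_zero hq]
    exact (continuous_coeff_rescaledExpansion j).tendsto 0 |>.mono_left nhdsWithin_le_nhds
  have hG : ∀ᶠ r in 𝓝[≠] 0, Hyperbolic (rescaledExpansion q n P.coeff r) := by
    refine eventually_hyperbolic_of_tendsto_coeff hρ hc
      (Eventually.of_forall (natDegree_rescaledExpansion_le hq' hPcoeff)) fun j => ?_
    have := htendsto P.coeff j
    rwa [← as_sum_range_C_mul_X_pow' P (hPdeg ▸ hn)] at this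
  refine Hyperbolic.of_tendsto_coeff (l := 𝓝[≠] 0)
    (Eventually.of_forall (natDegree_rescaledExpansion_le hq' (m := Fintype.card ι)
      fun k hk => by simp [hPcoeff k hk])) ?_ (htendsto _)
  -- Undoing the rescaling (`x ↦ r x`) turns both rescaled expansions into `q`-expansions,
  -- the second being the image of the first under the multiplier.
  filter_upwards [hG, self_mem_nhdsWithin] with r hGr hr
  rw [← hyperbolic_comp_C_mul_X_iff hr, rescaledExpansion_comp_C_mul_X hq'] at hGr ⊢
  simpa only [mul_assoc] using h n _ hGr

theorem coeff_sum_range_C_mul_X_pow (b : ℕ → ℝ) (n j : ℕ) :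
    (∑ k ∈ Finset.range n, C (b k) * X ^ k).coeff j = if j < n then b j else 0 := by
  simp [finsetSum_coeff]

theorem stmt_0 (q : ℕ → Polynomial ℝ) (hq : ∀ k, (q k).degree = k)
    (γ : ℕ → ℝ) (h : IsMultiplierSeqFor q γ) :
    IsMultiplierSeqFor (fun k => X ^ k) γ := by
  intro n a hP
  set P := ∑ k ∈ Finset.range n, C (a k) * X ^ k
  have hPcoeff (j : ℕ) : P.coeff j = if j < n then a j else 0 :=
    coeff_sum_range_C_mul_X_pow a n j
  rw [show ∑ k ∈ Finset.range n, C (γ k * a k) * X ^ k =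
      ∑ k ∈ Finset.range n, C (γ k * P.coeff k) * X ^ k from
    Finset.sum_congr rfl fun k hk => by simp [hPcoeff, Finset.mem_range.mp hk]]
  rcases eq_or_ne P 0 with hP0 | hP0
  · simp [hP0, Hyperbolic]
  have hdeg : P.natDegree < n := by
    rw [natDegree_lt_iff_degree_lt hP0, degree_lt_iff_coeff_zero]
    exact fun j hj => by simp [hPcoeff, hj]
  obtain ⟨m, ρ, rfl, hρ, hlim⟩ := hP.exists_tendsto_injective_roots
  refine Hyperbolic.of_tendsto_coeff (l := 𝓝[>] 0) (N := n)
    (G := fun ε => ∑ k ∈ Finset.range n,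
      C (γ k * (C P.leadingCoeff * ∏ i, (X - C (ρ ε i))).coeff k) * X ^ k)
    (Eventually.of_forall fun ε => natDegree_sum_le_of_forall_le _ _ fun k hk =>
      (natDegree_C_mul_X_pow_le _ k).trans (Finset.mem_range.mp hk).le) ?_ fun j => ?_
  · filter_upwards [self_mem_nhdsWithin] with ε hε
    exact h.hyperbolic_of_injective_roots hq (hρ ε hε) (leadingCoeff_ne_zero.mpr hP0)
      (by simpa using hdeg)
  · simp only [coeff_sum_range_C_mul_X_pow]
    split_ifs
    exacts [(hlim j).const_mul _, tendsto_const_nhds]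
end

section
/- For every real number α, the sequence (k + α)_{k=0}^∞ is not a Legendre multiplier sequence. -/
/-!
The hyperbolic polynomial `5 (x + 1)³ = 10 Le₀ + 18 Le₁ + 10 Le₂ + 2 Le₃` is sent by the
operator `Le_k ↦ (k + α) Le_k` to the cubic `5(3 + α) x³ + 15(2 + α) x² + (9 + 15α) x + (5α - 10)`.
Its discriminant `-180 (60α² + 516α + 1263)` is negative for every `α`, whereas a real cubic with
only real roots has discriminant `(a² ∏ (rᵢ - rⱼ))² ≥ 0`. At `α = -3` the cubic degenerates to
`-15x² - 36x - 25`, a quadratic of discriminant `-204`.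
-/

open Polynomial

/-- The Legendre polynomials, via Rodrigues' formula
`Le n = (1/(2^n n!)) Dⁿ[(x²-1)ⁿ]`. -/
noncomputable def legendre (n : ℕ) : Polynomial ℝ :=
  C (1 / (2 ^ n * n.factorial : ℝ)) * derivative^[n] ((X ^ 2 - 1) ^ n)

/-- A Legendre multiplier sequence. -/
def IsLegendreMS (γ : ℕ → ℝ) : Prop := IsMultiplierSeqFor legendre γ

lemma Hyperbolic.ofReal_re_eq {p : ℝ[X]} (h : Hyperbolic p) {z : ℂ}
    (hz : z ∈ (p.map (algebraMap ℝ ℂ)).roots) : (z.re : ℂ) = z :=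
  Complex.ext rfl (h z hz).symm

lemma Hyperbolic.exists_isRoot {p : ℝ[X]} (h : Hyperbolic p) (hp : p.natDegree ≠ 0) :
    ∃ x : ℝ, p.IsRoot x := by
  have hdeg : (p.map (algebraMap ℝ ℂ)).degree ≠ 0 := by
    rw [degree_map]; exact mt natDegree_eq_of_degree_eq_some hp
  obtain ⟨z, hz⟩ := IsAlgClosed.exists_root _ hdeg
  have hmem : z ∈ (p.map (algebraMap ℝ ℂ)).roots :=
    (mem_roots (Polynomial.map_ne_zero (ne_zero_of_natDegree_gt (Nat.pos_of_ne_zero hp)))).mpr hz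
  rw [← h.ofReal_re_eq hmem] at hz
  exact ⟨z.re, hz.of_map (algebraMap ℝ ℂ).injective⟩

lemma hyperbolic_C_mul_X_sub_C_pow (a r : ℝ) (n : ℕ) : Hyperbolic (C a * (X - C r) ^ n) := by
  rcases eq_or_ne a 0 with rfl | ha
  · simp [Hyperbolic]
  intro z hz
  rw [Polynomial.map_mul, Polynomial.map_pow, map_C, Polynomial.map_sub, map_X, map_C,
    roots_C_mul _ (by simpa using ha), roots_pow, roots_X_sub_C] at hz
  rw [Multiset.mem_singleton.mp (Multiset.mem_of_mem_nsmul hz)]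
  simp

lemma discrim_nonneg_of_hyperbolic {a b c : ℝ} (ha : a ≠ 0)
    (h : Hyperbolic (C a * X ^ 2 + C b * X + C c)) : 0 ≤ discrim a b c := by
  obtain ⟨x, hx⟩ := h.exists_isRoot (by rw [natDegree_quadratic ha]; norm_num)
  rw [discrim_eq_sq_of_quadratic_eq_zero (x := x) (by simpa [sq, IsRoot] using hx)]
  positivity

lemma Cubic.discr_nonneg_of_hyperbolic {P : Cubic ℝ} (ha : P.a ≠ 0) (h : Hyperbolic P.toPoly) :
    0 ≤ P.discr := by
  obtain ⟨x, y, z, h3⟩ :=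
    (Cubic.splits_iff_roots_eq_three (φ := algebraMap ℝ ℂ) ha).mp (IsAlgClosed.splits _)
  have hreal : ∀ w ∈ (Cubic.map (algebraMap ℝ ℂ) P).roots, (w.re : ℂ) = w := fun w hw =>
    h.ofReal_re_eq (by rwa [Cubic.map_roots] at hw)
  have hdisc := Cubic.discr_eq_prod_three_roots ha h3
  rw [← hreal x (by simp [h3]), ← hreal y (by simp [h3]), ← hreal z (by simp [h3]),
    Complex.coe_algebraMap] at hdisc
  have hsq : P.discr = (P.a * P.a * (x.re - y.re) * (x.re - z.re) * (y.re - z.re)) ^ 2 := by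
    exact_mod_cast hdisc
  rw [hsq]
  positivity

lemma eval_legendre_zero (x : ℝ) : (legendre 0).eval x = 1 := by
  simp [legendre]

lemma eval_legendre_one (x : ℝ) : (legendre 1).eval x = x := by
  simp only [legendre, pow_one, Function.iterate_one, Nat.factorial_one, Nat.cast_one, derivative_sub,
    derivative_X_pow, derivative_one, sub_zero, eval_mul, eval_C, eval_pow, eval_X]
  ring

lemma eval_legendre_two (x : ℝ) : (legendre 2).eval x = (3 * x ^ 2 - 1) / 2 := by
  rw [legendre, show ((X : ℝ[X]) ^ 2 - 1) ^ 2 = X ^ 4 - 2 * X ^ 2 + 1 by ring]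
  simp only [Function.iterate_succ_apply', Function.iterate_zero_apply, derivative_add,
    derivative_sub, derivative_mul, derivative_X_pow, derivative_one, derivative_ofNat,
    derivative_C, derivative_zero, eval_zero, eval_mul, eval_add, eval_sub, eval_C, eval_X,
    eval_pow, eval_ofNat, zero_mul, Nat.factorial, Nat.cast_ofNat, Nat.cast_succ]
  ring

lemma eval_legendre_three (x : ℝ) : (legendre 3).eval x = (5 * x ^ 3 - 3 * x) / 2 := by
  rw [legendre, show ((X : ℝ[X]) ^ 2 - 1) ^ 3 = X ^ 6 - 3 * X ^ 4 + 3 * X ^ 2 - 1 by ring]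
  simp only [Function.iterate_succ_apply', Function.iterate_zero_apply, derivative_add,
    derivative_sub, derivative_mul, derivative_X_pow, derivative_one, derivative_ofNat,
    derivative_C, derivative_zero, eval_zero, eval_mul, eval_add, eval_sub, eval_C, eval_X,
    eval_pow, eval_ofNat, zero_mul, Nat.factorial, Nat.cast_ofNat, Nat.cast_succ]
  ring

def cubeLegendreCoeff : ℕ → ℝ
  | 0 => 10
  | 1 => 18
  | 2 => 10
  | _ => 2

lemma sum_cubeLegendreCoeff_mul_legendre :
    ∑ k ∈ Finset.range 4, C (cubeLegendreCoeff k) * legendre k = C 5 * (X - C (-1)) ^ 3 := by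
  refine Polynomial.funext fun x => ?_
  simp only [Finset.sum_range_succ, Finset.sum_range_zero, cubeLegendreCoeff, zero_add, eval_add,
    eval_mul, eval_C, eval_pow, eval_sub, eval_X, eval_legendre_zero, eval_legendre_one,
    eval_legendre_two, eval_legendre_three]
  ring

lemma sum_shift_mul_cubeLegendreCoeff_mul_legendre (α : ℝ) :
    ∑ k ∈ Finset.range 4, C (((k : ℝ) + α) * cubeLegendreCoeff k) * legendre k =
      (⟨5 * (3 + α), 15 * (2 + α), 9 + 15 * α, 5 * α - 10⟩ : Cubic ℝ).toPoly := by
  refine Polynomial.funext fun x => ?_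
  simp only [Finset.sum_range_succ, Finset.sum_range_zero, cubeLegendreCoeff, Cubic.toPoly,
    zero_add, eval_add, eval_mul, eval_C, eval_pow, eval_X, eval_legendre_zero, eval_legendre_one,
    eval_legendre_two, eval_legendre_three, Nat.cast_zero, Nat.cast_one, Nat.cast_ofNat]
  ring

theorem stmt_11 (α : ℝ) : ¬ IsLegendreMS (fun k => (k : ℝ) + α) := by
  intro hMS
  set P : Cubic ℝ := ⟨5 * (3 + α), 15 * (2 + α), 9 + 15 * α, 5 * α - 10⟩
  have hP : Hyperbolic P.toPoly := by
    rw [← sum_shift_mul_cubeLegendreCoeff_mul_legendre]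
    refine hMS 4 cubeLegendreCoeff ?_
    rw [sum_cubeLegendreCoeff_mul_legendre]
    exact hyperbolic_C_mul_X_sub_C_pow 5 (-1) 3
  by_cases ha : P.a = 0
  · have hα : α = -3 := by linarith [show 5 * (3 + α) = 0 from ha]
    have hb : P.b ≠ 0 := by simp only [P, hα]; norm_num
    have hdisc := discrim_nonneg_of_hyperbolic hb (Cubic.of_a_eq_zero ha ▸ hP)
    simp only [P, discrim, hα] at hdisc
    norm_num at hdisc
  · have hdisc := P.discr_nonneg_of_hyperbolic ha hP
    simp only [P, Cubic.discr] at hdisc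
    nlinarith [sq_nonneg (α + 43 / 10)]
end

section
/- The sequence (k² + k + 1)_{k=0}^∞ is a Legendre multiplier sequence. -/
open Polynomial

/-!
The operator `T = D (X² - 1) D + 1` acts on `legendre n` as multiplication by `n² + n + 1`
(Legendre's differential equation), so it suffices that `T` preserves hyperbolicity.
Fix `z` with `Im z > 0` and `p = ∏ (X - rᵢ)` with real `rᵢ`. Then `(T p)(z)` is the constant
term of the quadratic `Q(ε) = p(z + d/dε) [(1 + (z - 1) ε) (1 + (z + 1) ε)]`. The roots of
`(1 + (z - 1) ε) (1 + (z + 1) ε)` lie in the open upper half-plane, and each factor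
`z - rᵢ + d/dε` preserves this, because on the closed lower half-plane
`f'/f = ∑ 1 / (ε - ρ)` has nonnegative imaginary part. Hence `(T p)(z) = Q(0) ≠ 0`, and roots
in the lower half-plane are excluded by conjugation.
-/

section
variable {R : Type*} [CommRing R]

noncomputable def legendreOp : R[X] →ₗ[R] R[X] :=
  derivative ∘ₗ LinearMap.mulLeft R (X ^ 2 - 1) ∘ₗ derivative + LinearMap.id

@[simp]
lemma legendreOp_apply (p : R[X]) :
    legendreOp p = derivative ((X ^ 2 - 1) * derivative p) + p := rfl

lemma legendreOp_C_mul (a : R) (p : R[X]) : legendreOp (C a * p) = C a * legendreOp p := by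
  simp only [← smul_eq_C_mul, map_smul]

lemma map_legendreOp {S : Type*} [CommRing S] (f : R →+* S) (p : R[X]) :
    (legendreOp p).map f = legendreOp (p.map f) := by
  simp [derivative_map]

lemma derivative_X_sq_sub_one_mul_derivative_iterate (n : ℕ) :
    derivative ((X ^ 2 - 1) * derivative (derivative^[n] ((X ^ 2 - 1) ^ n : R[X]))) =
      C ((n : R) * (n + 1)) * derivative^[n] ((X ^ 2 - 1) ^ n) := by
  set v : R[X] := (X ^ 2 - 1) ^ n
  have hv : derivative v * (X ^ 2 - 1) = C (2 * n : R) * (v * X) := by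
    rcases n with _ | n
    · simp [v]
    simp [v, derivative_pow]
    ring
  have hv' : derivative^[2] v * X ^ 2 - derivative^[2] v + C 2 * (derivative v * X) =
      C (2 * n : R) * (v + derivative v * X) := by
    have := congrArg derivative hv
    simp only [derivative_mul, derivative_sub, derivative_X_pow, derivative_one, derivative_X,
      derivative_C] at this
    simp only [Function.iterate_succ, Function.iterate_zero, Function.comp_apply, id]
    linear_combination this
  have h := congrArg (derivative^[n]) hv'
  simp only [iterate_map_sub, iterate_map_add, iterate_derivative_derivative_mul_X_sq,
    iterate_derivative_derivative_mul_X, iterate_derivative_C_mul, ← Function.iterate_add_apply] at h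
  simp only [Function.iterate_succ_apply', derivative_mul, derivative_sub, derivative_X_pow,
    derivative_one] at h ⊢
  rcases n with _ | n
  · simp at h ⊢; linear_combination h
  · simp only [nsmul_eq_mul, map_mul, map_add, map_natCast, map_ofNat, map_one] at h ⊢
    push_cast at h ⊢
    linear_combination h

-- `p(z + d/dε)` applied to `(1 + (z - 1) ε) (1 + (z + 1) ε)`, written out.
noncomputable def legendreOpQuad (z : R) (p : R[X]) : R[X] :=
  C ((legendreOp p).eval z) + C (2 * ((z ^ 2 - 1) * (derivative p).eval z + z * p.eval z)) * X +
    C ((z ^ 2 - 1) * p.eval z) * X ^ 2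

lemma legendreOpQuad_one (z : R) :
    legendreOpQuad z 1 = (C (z - 1) * X + 1) * (C (z + 1) * X + 1) := by
  simp only [legendreOpQuad, legendreOp_apply, derivative_one, mul_zero, derivative_zero,
    eval_zero, eval_one, zero_add, mul_one, map_add, map_mul, map_sub, map_pow, map_one, map_ofNat]
  ring

lemma legendreOpQuad_X_sub_C_mul (z r : R) (p : R[X]) :
    legendreOpQuad z ((X - C r) * p) =
      C (z - r) * legendreOpQuad z p + derivative (legendreOpQuad z p) := by
  simp [legendreOpQuad, derivative_mul, derivative_pow, map_ofNat]
  ring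

lemma eval_zero_legendreOpQuad (z : R) (p : R[X]) :
    (legendreOpQuad z p).eval 0 = (legendreOp p).eval z := by
  simp [legendreOpQuad]

end

lemma legendreOp_legendre (n : ℕ) :
    legendreOp (legendre n) = C ((n : ℝ) ^ 2 + n + 1) * legendre n := by
  have hC : C ((n : ℝ) ^ 2 + n + 1) = C ((n : ℝ) * (n + 1)) + 1 := by
    rw [← C_1, ← C_add]; ring_nf
  rw [legendre, legendreOp_C_mul, legendreOp_apply,
    derivative_X_sq_sub_one_mul_derivative_iterate, hC]
  ring

def RootsInUpperHalfPlane (f : ℂ[X]) : Prop :=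
  ∀ z : ℂ, f.IsRoot z → 0 < z.im

lemma RootsInUpperHalfPlane.C_mul_add_derivative {f : ℂ[X]} (hf : RootsInUpperHalfPlane f)
    {s : ℂ} (hs : 0 < s.im) : RootsInUpperHalfPlane (C s * f + derivative f) := by
  intro ε hε
  by_contra! hlow
  have hfε : f.eval ε ≠ 0 := fun h => (hf ε h).not_ge hlow
  have hsum : s + (f.roots.map fun ρ => 1 / (ε - ρ)).sum = 0 := by
    have := hε.eq_zero
    rw [eval_add, eval_mul, eval_C, (IsAlgClosed.splits f).eval_derivative_eq_eval_mul_sum hfε,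
      mul_comm s, ← mul_add] at this
    exact (mul_eq_zero.mp this).resolve_left hfε
  have him_nonneg : 0 ≤ (f.roots.map fun ρ => 1 / (ε - ρ)).sum.im := by
    rw [← Complex.coe_imAddGroupHom, map_multiset_sum, Multiset.map_map]
    refine Multiset.sum_nonneg fun x hx => ?_
    obtain ⟨ρ, hρ, rfl⟩ := Multiset.mem_map.mp hx
    have hρ_im : 0 < ρ.im := hf ρ (isRoot_of_mem_roots hρ)
    simp only [Function.comp_apply, Complex.coe_imAddGroupHom, one_div, Complex.inv_im,
      Complex.sub_im]
    exact div_nonneg (by linarith) (Complex.normSq_nonneg _)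
  have := congrArg Complex.im hsum
  rw [Complex.add_im, Complex.zero_im] at this
  linarith

lemma RootsInUpperHalfPlane.mul {f g : ℂ[X]} (hf : RootsInUpperHalfPlane f)
    (hg : RootsInUpperHalfPlane g) : RootsInUpperHalfPlane (f * g) := fun z hz =>
  (root_mul.mp hz).elim (hf z) (hg z)

lemma rootsInUpperHalfPlane_C_mul_X_add_one {u : ℂ} (hu : 0 < u.im) :
    RootsInUpperHalfPlane (C u * X + 1) := by
  intro ε hε
  have hu0 : u ≠ 0 := fun h => by simp [h] at hu
  have hε' : ε = -u⁻¹ := by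
    simp only [IsRoot, eval_add, eval_mul, eval_C, eval_X, eval_one] at hε
    field_simp
    linear_combination hε
  rw [hε', Complex.neg_im, Complex.inv_im, neg_div, neg_neg]
  exact div_pos hu (Complex.normSq_pos.mpr hu0)

lemma rootsInUpperHalfPlane_legendreOpQuad_prod {z : ℂ} (hz : 0 < z.im) (S : Multiset ℂ)
    (hS : ∀ r ∈ S, r.im = 0) :
    RootsInUpperHalfPlane (legendreOpQuad z (S.map fun r => X - C r).prod) := by
  induction S using Multiset.induction_on with
  | empty =>
    rw [Multiset.map_zero, Multiset.prod_zero, legendreOpQuad_one]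
    exact (rootsInUpperHalfPlane_C_mul_X_add_one (by simpa using hz)).mul
      (rootsInUpperHalfPlane_C_mul_X_add_one (by simpa using hz))
  | cons r S ih =>
    rw [Multiset.map_cons, Multiset.prod_cons, legendreOpQuad_X_sub_C_mul]
    refine (ih fun r' hr' => hS r' (Multiset.mem_cons_of_mem hr')).C_mul_add_derivative ?_
    simpa [hS r (Multiset.mem_cons_self r S)] using hz

lemma Hyperbolic.eval_legendreOp_ne_zero {p : ℝ[X]} (hp : Hyperbolic p) (hp0 : p ≠ 0) {z : ℂ}
    (hz : 0 < z.im) : ((legendreOp p).map (algebraMap ℝ ℂ)).eval z ≠ 0 := by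
  rw [map_legendreOp]
  set q := p.map (algebraMap ℝ ℂ)
  have hq : C q.leadingCoeff * (q.roots.map fun r => X - C r).prod = q :=
    C_leadingCoeff_mul_prod_multiset_X_sub_C (splits_iff_card_roots.mp (IsAlgClosed.splits q))
  have hlc : q.leadingCoeff ≠ 0 := by simpa [q] using hp0
  rw [← hq, legendreOp_C_mul, eval_mul, eval_C, ← eval_zero_legendreOpQuad]
  refine mul_ne_zero hlc fun h => ?_
  simpa using rootsInUpperHalfPlane_legendreOpQuad_prod hz q.roots hp 0 h

lemma hyperbolic_of_eval_ne_zero {p : ℝ[X]}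
    (h : ∀ z : ℂ, 0 < z.im → (p.map (algebraMap ℝ ℂ)).eval z ≠ 0) : Hyperbolic p := by
  intro z hz
  have hroot : aeval z p = 0 := by rw [aeval_def, ← eval_map]; exact isRoot_of_mem_roots hz
  by_contra hne
  rcases lt_or_gt_of_ne hne with hneg | hpos
  · refine h (starRingEnd ℂ z) (by simpa using hneg) ?_
    rw [eval_map, ← aeval_def, aeval_conj, hroot, map_zero]
  · exact h z hpos (by rw [eval_map, ← aeval_def, hroot])

lemma Hyperbolic.legendreOp {p : ℝ[X]} (hp : Hyperbolic p) : Hyperbolic (legendreOp p) := by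
  rcases eq_or_ne p 0 with rfl | hp0
  · simpa using hp
  · exact hyperbolic_of_eval_ne_zero fun z hz => hp.eval_legendreOp_ne_zero hp0 hz

theorem stmt_16 : IsLegendreMS (fun k => (k : ℝ) ^ 2 + k + 1) := by
  intro n a ha
  convert ha.legendreOp using 1
  rw [map_sum]
  refine Finset.sum_congr rfl fun k _ => ?_
  rw [legendreOp_C_mul, legendreOp_legendre, ← mul_assoc, ← C_mul, mul_comm (a k)]
end
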